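/- arXiv:2107.04081 — 2 statements merged into one kernel-verified Lean document; each statement's English description precedes it below -/
import Mathlib

section
/- Let C = ⟨A, B, Q, q0, δ, K, col⟩ be a deterministic concurrent arena (not necessarily locally determined) and W ⊆ K^ω. If Player A has a winning color strategy in the sequential game ⟨Seq(C), Seq(W)⟩, then Player A has a winning color strategy in ⟨C, W⟩. -/
open MeasureTheory
open scoped Classical

universe u

/-- The cylinder set generated by a finite word. -/
def Cyl {K : Type u} (w : List K) : Set (ℕ → K) :=
  {ρ | ∀ i : ℕ, ∀ h : i < w.length, ρ i = w.get ⟨i, h⟩}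

/-- The σ-algebra on `ℕ → K` generated by cylinder sets. -/
def BorelSeq (K : Type u) : MeasurableSpace (ℕ → K) :=
  MeasurableSpace.generateFrom {s | ∃ w : List K, s = Cyl w}

/-- A game form (given by its outcome function `ρ : S_A → S_B → O`) is determined if
for every subset `V` of outcomes, either Player A can force the outcome into `V`,
or Player B can force it out of `V`. -/
def GFDetermined {SA SB O : Type u} (ρ : SA → SB → O) : Prop :=
  ∀ V : Set O, (∃ a, ∀ b, ρ a b ∈ V) ∨ (∃ b, ∀ a, ρ a b ∉ V)

/-- The color history `col(π_0,π_1) ⋯ col(π_{n-1},π_n)` of a play prefix. -/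
def colorHist {Q K : Type u} (col : Q → Q → K) (π : ℕ → Q) (n : ℕ) : List K :=
  List.ofFn (fun i : Fin n => col (π i) (π (i + 1)))

/-- The color sequence of an infinite play. -/
def colorSeq {Q K : Type u} (col : Q → Q → K) (π : ℕ → Q) : ℕ → K :=
  fun n => col (π n) (π (n + 1))

/-- `π` is a play consistent with Player A's color strategy `sA`. -/
def PlayA {A B Q K : Type u} (q0 : Q) (δ : Q → A → B → Q) (col : Q → Q → K)
    (sA : List K → Q → A) (π : ℕ → Q) : Prop :=
  π 0 = q0 ∧ ∀ n, ∃ b, π (n + 1) = δ (π n) (sA (colorHist col π n) (π n)) b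

/-- `π` is a play consistent with Player B's color strategy `sB`. -/
def PlayB {A B Q K : Type u} (q0 : Q) (δ : Q → A → B → Q) (col : Q → Q → K)
    (sB : List K → Q → B) (π : ℕ → Q) : Prop :=
  π 0 = q0 ∧ ∀ n, ∃ a, π (n + 1) = δ (π n) a (sB (colorHist col π n) (π n))

/-- Player A's color strategy `sA` is winning for objective `W`. -/
def WinA {A B Q K : Type u} (q0 : Q) (δ : Q → A → B → Q) (col : Q → Q → K)
    (W : Set (ℕ → K)) (sA : List K → Q → A) : Prop :=
  ∀ π : ℕ → Q, PlayA q0 δ col sA π → colorSeq col π ∈ W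

/-- Player B's color strategy `sB` is winning for the objective complementary to `W`. -/
def WinB {A B Q K : Type u} (q0 : Q) (δ : Q → A → B → Q) (col : Q → Q → K)
    (W : Set (ℕ → K)) (sB : List K → Q → B) : Prop :=
  ∀ π : ℕ → Q, PlayB q0 δ col sB π → colorSeq col π ∉ W

/-- Transition function of the sequential version: from a Player A vertex `q`,
action `a` moves to `(q, a)`; from a Player B vertex `(q, a)`, Player B's action `b`
moves to `δ q a b`. -/
def seqDelta {A B Q : Type u} (δ : Q → A → B → Q) :
    Q ⊕ Q × A → A → B → Q ⊕ Q × A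
  | Sum.inl q, a, _ => Sum.inr (q, a)
  | Sum.inr qa, _, b => Sum.inl (δ qa.1 qa.2 b)

/-- Coloring of the sequential version: edges `(q, a) → q'` carry `some (col q q')`,
all other edges carry the fresh color `none`. -/
def seqCol {A Q K : Type u} (col : Q → Q → K) :
    Q ⊕ Q × A → Q ⊕ Q × A → Option K
  | Sum.inr qa, Sum.inl q' => some (col qa.1 q')
  | _, _ => none

/-- The length-`n` prefix of an infinite sequence, as a finite word. -/
def prefixWord {D : Type u} (ρ : ℕ → D) (n : ℕ) : List D :=
  List.ofFn (fun i : Fin n => ρ i)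

/-- A finite word is a prefix of an infinite sequence. -/
def IsPrefixOfSeq {K : Type u} (w : List K) (ρ : ℕ → K) : Prop :=
  ∀ i : ℕ, ∀ h : i < w.length, w.get ⟨i, h⟩ = ρ i

/-- `ρ ∈ K^ω` is the projection of `ρ' ∈ (Option K)^ω`: every erased prefix of `ρ'`
is a prefix of `ρ` and the lengths of the erased prefixes tend to infinity
(equivalently, `ρ'` has infinitely many `some` entries whose values, in order,
form `ρ`). -/
def IsProjOf {K : Type u} (ρ : ℕ → K) (ρ' : ℕ → Option K) : Prop :=
  (∀ n : ℕ, IsPrefixOfSeq ((prefixWord ρ' n).reduceOption) ρ) ∧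
  Filter.Tendsto (fun n => ((prefixWord ρ' n).reduceOption).length)
    Filter.atTop Filter.atTop

/-- The sequential version `Seq(W)` of an objective `W ⊆ K^ω`: the sequences in
`(Option K)^ω` with infinitely many `some` entries whose subsequence of values
lies in `W`. -/
def SeqObj {K : Type u} (W : Set (ℕ → K)) : Set (ℕ → Option K) :=
  {ρ' | ∃ ρ ∈ W, IsProjOf ρ ρ'}

/-! A play `π` of `C` against the strategy `h, q ↦ σA (seqHist h) (inl q)` is simulated in
`Seq(C)` by `π 0, (π 0, a 0), π 1, (π 1, a 1), …`, where Player B's move at each vertex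
`(π n, a n)` is the one that produced `π (n + 1)`. That play is consistent with `σA` because its
color history after `2 n` steps is exactly `seqHist` of the color history of `π` after `n` steps.
Erasing the `none`s from its color sequence gives back the color sequence of `π`, so `π` wins
because the simulated play wins in `Seq(W)`. -/

def seqHist {K : Type u} (h : List K) : List (Option K) :=
  h.flatMap fun c => [none, some c]

@[simp]
lemma seqHist_append_singleton {K : Type u} (h : List K) (c : K) :
    seqHist (h ++ [c]) = seqHist h ++ [none, some c] := by
  simp [seqHist]

@[simp]
lemma reduceOption_seqHist {K : Type u} (h : List K) : (seqHist h).reduceOption = h := by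
  induction h with
  | nil => rfl
  | cons c t ih =>
    change (none :: some c :: seqHist t).reduceOption = c :: t
    simp [List.reduceOption_cons_of_none, List.reduceOption_cons_of_some, ih]

lemma colorHist_succ {Q K : Type u} (col : Q → Q → K) (π : ℕ → Q) (n : ℕ) :
    colorHist col π (n + 1) = colorHist col π n ++ [col (π n) (π (n + 1))] := by
  rw [colorHist, List.ofFn_succ', List.concat_eq_append]
  rfl

lemma prefixWord_colorSeq {Q K : Type u} (col : Q → Q → K) (π : ℕ → Q) (n : ℕ) :
    prefixWord (colorSeq col π) n = colorHist col π n :=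
  rfl

lemma eq_of_forall_isPrefixOfSeq_prefixWord {K : Type u} {σ ρ : ℕ → K}
    (h : ∀ n, IsPrefixOfSeq (prefixWord σ n) ρ) : σ = ρ := by
  funext i
  have hi := h (i + 1) i (by simp [prefixWord])
  simp only [prefixWord, List.get_ofFn] at hi
  exact hi

def seqPlay {A Q : Type u} (π : ℕ → Q) (a : ℕ → A) (n : ℕ) : Q ⊕ Q × A :=
  if n % 2 = 0 then Sum.inl (π (n / 2)) else Sum.inr (π (n / 2), a (n / 2))

section SeqPlay

variable {A Q K : Type u} (π : ℕ → Q) (a : ℕ → A)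

@[simp]
lemma seqPlay_two_mul (n : ℕ) : seqPlay π a (2 * n) = Sum.inl (π n) := by
  simp [seqPlay]

@[simp]
lemma seqPlay_two_mul_add_one (n : ℕ) : seqPlay π a (2 * n + 1) = Sum.inr (π n, a n) := by
  simp [seqPlay, Nat.add_mod, show (2 * n + 1) / 2 = n by omega]

lemma seqPlay_two_mul_add_two (n : ℕ) : seqPlay π a (2 * n + 1 + 1) = Sum.inl (π (n + 1)) := by
  rw [show 2 * n + 1 + 1 = 2 * (n + 1) by ring, seqPlay_two_mul]

lemma colorHist_seqPlay_two_mul (col : Q → Q → K) (n : ℕ) :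
    colorHist (seqCol col) (seqPlay π a) (2 * n) = seqHist (colorHist col π n) := by
  induction n with
  | zero => rfl
  | succ n ih =>
    rw [show 2 * (n + 1) = 2 * n + 1 + 1 by ring, colorHist_succ, colorHist_succ, ih,
      seqPlay_two_mul_add_one, seqPlay_two_mul, seqPlay_two_mul_add_two, colorHist_succ,
      seqHist_append_singleton]
    simp [seqCol]

lemma colorSeq_eq_of_isProjOf_seqPlay {col : Q → Q → K} {ρ : ℕ → K}
    (h : IsProjOf ρ (colorSeq (seqCol col) (seqPlay π a))) : colorSeq col π = ρ := by
  refine eq_of_forall_isPrefixOfSeq_prefixWord fun n => ?_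
  simpa only [prefixWord_colorSeq, colorHist_seqPlay_two_mul, reduceOption_seqHist] using
    h.1 (2 * n)

end SeqPlay

def liftStrategy {A Q K : Type u} (σA : List (Option K) → Q ⊕ Q × A → A) : List K → Q → A :=
  fun h q => σA (seqHist h) (Sum.inl q)

lemma playA_seqPlay {A B Q K : Type u} {q0 : Q} {δ : Q → A → B → Q} {col : Q → Q → K}
    {σA : List (Option K) → Q ⊕ Q × A → A} {π : ℕ → Q}
    (hπ : PlayA q0 δ col (liftStrategy σA) π) :
    PlayA (Sum.inl q0) (seqDelta δ) (seqCol col) σA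
      (seqPlay π fun n => liftStrategy σA (colorHist col π n) (π n)) := by
  refine ⟨by simp [seqPlay, hπ.1], fun m => ?_⟩
  obtain ⟨b, hb⟩ := hπ.2 (m / 2)
  refine ⟨b, ?_⟩
  obtain ⟨n, rfl | rfl⟩ := Nat.even_or_odd' m
  · rw [seqPlay_two_mul_add_one, seqPlay_two_mul, colorHist_seqPlay_two_mul]
    rfl
  · rw [seqPlay_two_mul_add_two, seqPlay_two_mul_add_one]
    simpa [seqDelta, show (2 * n + 1) / 2 = n by omega] using hb

theorem stmt7_general {A B Q K : Type u}
    (q0 : Q) (δ : Q → A → B → Q) (col : Q → Q → K) (W : Set (ℕ → K))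
    (hseq : ∃ σA : List (Option K) → Q ⊕ Q × A → A,
      WinA (Sum.inl q0) (seqDelta δ) (seqCol col) (SeqObj W) σA) :
    ∃ sA : List K → Q → A, WinA q0 δ col W sA := by
  obtain ⟨σA, hσA⟩ := hseq
  refine ⟨liftStrategy σA, fun π hπ => ?_⟩
  obtain ⟨ρ, hρW, hproj⟩ := hσA _ (playA_seqPlay hπ)
  rwa [colorSeq_eq_of_isProjOf_seqPlay π _ hproj]

/-- For any deterministic concurrent arena (not necessarily locally determined):
if Player A has a winning color strategy in the sequential game `⟨Seq(C), Seq(W)⟩`,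
then Player A has a winning color strategy in `⟨C, W⟩`. -/
theorem stmt7 {A B Q K : Type u} [Nonempty A] [Nonempty B] [Nonempty Q] [Nonempty K]
    (q0 : Q) (δ : Q → A → B → Q) (col : Q → Q → K) (W : Set (ℕ → K))
    (hseq : ∃ σA : List (Option K) → Q ⊕ Q × A → A,
      WinA (Sum.inl q0) (seqDelta δ) (seqCol col) (SeqObj W) σA) :
    ∃ sA : List K → Q → A, WinA q0 δ col W sA :=
  stmt7_general q0 δ col W hseq
end

section
/- Let K be a non-empty set and let L ⊆ (Option K)^* be a regular language. Say that ρ ∈ K^ω is the projection of ρ' ∈ (Option K)^ω if for every n ∈ ℕ the finite word φ(ρ'_0 ⋯ ρ'_{n-1}) is a prefix of ρ and the lengths |φ(ρ'_0 ⋯ ρ'_{n-1})| tend to infinity as n → ∞ (equivalently, ρ' has infinitely many entries of the form some k and the sequence of their values, read in order, is ρ). Then {ρ ∈ K^ω | ρ is the projection of some ρ' ∈ [L]} = [φ[L]]. -/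
universe u

/-- `L` is a regular language over `K`: it uses only finitely many letters and it is
accepted by a deterministic finite automaton with finitely many states. -/
def RegularLang {K : Type u} (L : Set (List K)) : Prop :=
  ∃ Sig : Finset K, (∀ w ∈ L, ∀ a ∈ w, a ∈ Sig) ∧
    ∃ (σ : Type u) (_ : Fintype σ) (M : DFA K σ), ∀ w : List K, w ∈ M.accepts ↔ w ∈ L

/-- `[L]`: the infinite sequences all of whose finite prefixes are prefixes of
words of `L`. -/
def LimitLang {K : Type u} (L : Set (List K)) : Set (ℕ → K) :=
  {ρ | ∀ n : ℕ, ∃ w ∈ L, prefixWord ρ n <+: w}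

/-- `ρ ≺_W ρ'` iff `ρ ∉ W` and `ρ' ∈ W`. -/
def PrefLt {K : Type u} (W : Set (ℕ → K)) (ρ ρ' : ℕ → K) : Prop := ρ ∉ W ∧ ρ' ∈ W

/-- `ρ ⪯_W ρ'` iff `¬(ρ' ≺_W ρ)`. -/
def PrefLe {K : Type u} (W : Set (ℕ → K)) (ρ ρ' : ℕ → K) : Prop := ¬ PrefLt W ρ' ρ

/-- `N ⪯_W N'` iff every element of `N` is `⪯_W` some element of `N'`. -/
def SetLe {K : Type u} (W : Set (ℕ → K)) (N N' : Set (ℕ → K)) : Prop :=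
  ∀ ρ ∈ N, ∃ ρ' ∈ N', PrefLe W ρ ρ'

/-- `N ≺_W N'` iff some element of `N'` is `≻_W` every element of `N`. -/
def SetLt {K : Type u} (W : Set (ℕ → K)) (N N' : Set (ℕ → K)) : Prop :=
  ∃ ρ' ∈ N', ∀ ρ ∈ N, PrefLt W ρ ρ'

/-- Left-fold iteration of an update function along a finite word. -/
def iterUpd {M K : Type u} (μ : M → K → M) (m : M) (ρ : List K) : M := ρ.foldl μ m

/-- `L^M_{m,m'}`: the words driving the memory from `m` to `m'`. -/
def MemLang {M K : Type u} (μ : M → K → M) (m m' : M) : Set (List K) :=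
  {ρ | iterUpd μ m ρ = m'}

/-- The language `ρ · L`. -/
def consLang {K : Type u} (ρ : List K) (L : Set (List K)) : Set (List K) :=
  {w | ∃ v ∈ L, w = ρ ++ v}

/-- Concatenation of languages. -/
def catLang {K : Type u} (L L' : Set (List K)) : Set (List K) :=
  {w | ∃ u ∈ L, ∃ v ∈ L', w = u ++ v}

/-- Kleene star of a language. -/
def kstarLang {K : Type u} (L : Set (List K)) : Set (List K) :=
  {w | ∃ ls : List (List K), (∀ u ∈ ls, u ∈ L) ∧ w = ls.flatten}

/-- `W` is `M`-monotone for the memory skeleton `⟨M, minit, μ⟩`. -/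
def MMonotone {M K : Type u} (μ : M → K → M) (minit : M) (W : Set (ℕ → K)) : Prop :=
  ∀ m : M, ∀ L1 L2 : Set (List K), RegularLang L1 → RegularLang L2 →
    (∃ ρ ∈ MemLang μ minit m,
        SetLt W (LimitLang (consLang ρ L1)) (LimitLang (consLang ρ L2))) →
    ∀ ρ' ∈ MemLang μ minit m,
        SetLe W (LimitLang (consLang ρ' L1)) (LimitLang (consLang ρ' L2))

/-- `W` is `M`-selective for the memory skeleton `⟨M, minit, μ⟩`. -/
def MSelective {M K : Type u} (μ : M → K → M) (minit : M) (W : Set (ℕ → K)) : Prop :=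
  ∀ ρ : List K, ∀ L1 L2 L3 : Set (List K),
    RegularLang L1 → RegularLang L2 → RegularLang L3 →
    L1 ⊆ MemLang μ (iterUpd μ minit ρ) (iterUpd μ minit ρ) →
    L2 ⊆ MemLang μ (iterUpd μ minit ρ) (iterUpd μ minit ρ) →
    SetLe W (LimitLang (consLang ρ (catLang (kstarLang (L1 ∪ L2)) L3)))
      (LimitLang (consLang ρ (kstarLang L1)) ∪ LimitLang (consLang ρ (kstarLang L2)) ∪
        LimitLang (consLang ρ L3))

/-- The sequential version of an update function: `none` leaves the memory
unchanged, `some k` updates by `k`. -/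
def seqUpd {M K : Type u} (μ : M → K → M) : M → Option K → M :=
  fun m o => match o with
    | none => m
    | some k => μ m k

/-! The inclusion `⊆` only needs that `φ` preserves prefixes. For `⊇`, fix a DFA for `L` and call
a state of level `n` one that is reached by a word projecting to `ρ₀ ⋯ ρₙ₋₁` and from which
acceptance is still possible; consecutive levels are linked by reading `some ρₙ` padded with
`none`s. Since `ρ ∈ [φ[L]]`, such paths exist of every finite length, so Kőnig's lemma (finitely
many states) gives an infinite one, and concatenating its padded steps yields `ρ' ∈ [L]`
projecting to `ρ`. -/

section Prefixes

variable {α : Type u}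

@[simp]
theorem prefixWord_length (ρ : ℕ → α) (n : ℕ) : (prefixWord ρ n).length = n := by
  simp [prefixWord]

@[simp]
theorem prefixWord_getElem (ρ : ℕ → α) (n i : ℕ) (h : i < (prefixWord ρ n).length) :
    (prefixWord ρ n)[i] = ρ i := by
  simp [prefixWord]

theorem prefixWord_succ (ρ : ℕ → α) (n : ℕ) :
    prefixWord ρ (n + 1) = prefixWord ρ n ++ [ρ n] := by
  rw [prefixWord, List.ofFn_succ', List.concat_eq_append]
  rfl

theorem prefixWord_prefix_of_le (ρ : ℕ → α) {m n : ℕ} (h : m ≤ n) :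
    prefixWord ρ m <+: prefixWord ρ n := by
  rw [List.prefix_iff_eq_take]
  exact List.ext_getElem (by simp [h]) fun i _ _ => by simp

theorem IsPrefixOfSeq.prefixWord_prefix {x : List α} {ρ : ℕ → α} (h : IsPrefixOfSeq x ρ)
    {n : ℕ} (hn : n ≤ x.length) : prefixWord ρ n <+: x := by
  rw [List.prefix_iff_eq_take]
  exact List.ext_getElem (by simp [hn]) fun i hi _ => by
    simpa using (h i (by simp at hi; omega)).symm

theorem isPrefixOfSeq_of_prefix_prefixWord {x : List α} {ρ : ℕ → α} {n : ℕ}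
    (h : x <+: prefixWord ρ n) : IsPrefixOfSeq x ρ := fun i hi => by
  rw [List.get_eq_getElem, h.getElem hi, prefixWord_getElem]

theorem exists_prefixWord_eq_of_prefix_chain {W : ℕ → List α} (hW : ∀ n, W n <+: W (n + 1))
    (hlen : ∀ n, n ≤ (W n).length) : ∃ ρ : ℕ → α, ∀ n, prefixWord ρ (W n).length = W n := by
  have hmono {m n : ℕ} (hmn : m ≤ n) : W m <+: W n := by
    induction n, hmn using Nat.le_induction with
    | base => exact List.prefix_refl _
    | succ n _ ih => exact ih.trans (hW n)
  refine ⟨fun i => (W (i + 1))[i]'(by have := hlen (i + 1); omega), fun n =>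
    List.ext_getElem (by simp) fun i _ hi => ?_⟩
  simp only [prefixWord_getElem]
  rcases le_total n (i + 1) with h | h
  · exact ((hmono h).getElem hi).symm
  · exact (hmono h).getElem _

end Prefixes

section Projection

variable {K : Type u}

theorem List.exists_prefix_reduceOption_eq {w : List (Option K)} {p : List K}
    (h : p <+: w.reduceOption) : ∃ u, u <+: w ∧ u.reduceOption = p := by
  obtain ⟨t, ht⟩ := h
  obtain ⟨u, v, rfl, hu, -⟩ := (List.reduceOption_eq_append_iff w p t).1 ht.symm
  exact ⟨u, List.prefix_append u v, hu⟩

theorem IsProjOf.mem_limitLang_image_reduceOption {L : Set (List (Option K))} {ρ : ℕ → K}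
    {ρ' : ℕ → Option K} (hproj : IsProjOf ρ ρ') (hρ' : ρ' ∈ LimitLang L) :
    ρ ∈ LimitLang (List.reduceOption '' L) := fun n => by
  obtain ⟨m, hm⟩ := (hproj.2.eventually_ge_atTop n).exists
  obtain ⟨w, hw, hpre⟩ := hρ' m
  exact ⟨w.reduceOption, ⟨w, hw, rfl⟩, ((hproj.1 m).prefixWord_prefix hm).trans hpre.reduceOption⟩

theorem isProjOf_of_forall_exists_reduceOption_eq {ρ : ℕ → K} {ρ' : ℕ → Option K}
    (h : ∀ n, ∃ m, (prefixWord ρ' m).reduceOption = prefixWord ρ n) : IsProjOf ρ ρ' := by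
  have hmono : Monotone fun m => (prefixWord ρ' m).reduceOption.length :=
    fun m m' hm => (prefixWord_prefix_of_le ρ' hm).reduceOption.length_le
  refine ⟨fun n => ?_, Filter.tendsto_atTop_atTop_of_monotone hmono fun n => ?_⟩
  · obtain ⟨m, hm⟩ := h n
    have hnm : n ≤ m := by simpa [hm] using (prefixWord ρ' m).reduceOption_length_le
    exact isPrefixOfSeq_of_prefix_prefixWord (hm ▸ (prefixWord_prefix_of_le ρ' hnm).reduceOption)
  · obtain ⟨m, hm⟩ := h n
    exact ⟨m, by simp [hm]⟩

end Projection

theorem exists_infinite_chain_of_finite_chains {σ : Type*} [Finite σ] (P : σ → Prop)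
    (R : ℕ → σ → σ → Prop)
    (h : ∀ n, ∃ s : ℕ → σ, P (s 0) ∧ ∀ i < n, R i (s i) (s (i + 1))) :
    ∃ s : ℕ → σ, P (s 0) ∧ ∀ i, R i (s i) (s (i + 1)) := by
  let α (n : ℕ) := {s : Fin (n + 1) → σ // P (s 0) ∧ ∀ i : Fin n, R i (s i.castSucc) (s i.succ)}
  have (n : ℕ) : Nonempty (α n) := by
    obtain ⟨s, hs₀, hs⟩ := h n
    exact ⟨⟨fun i => s i, hs₀, fun i => hs i i.2⟩⟩
  let π {i j : ℕ} (hij : i ≤ j) (s : α j) : α i :=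
    ⟨fun k => s.1 (Fin.castLE (by omega) k), s.2.1, fun k => s.2.2 (Fin.castLE hij k)⟩
  obtain ⟨f, hf⟩ := exists_seq_forall_proj_of_forall_finite π (fun _ _ => rfl)
    (fun _ _ _ _ _ _ => rfl) (fun _ _ => Set.toFinite _)
  refine ⟨fun n => (f n).1 (Fin.last n), (f 0).2.1, fun n => ?_⟩
  have hrestrict := congrArg (fun s => s.1 (Fin.last n)) (hf (Nat.le_succ n))
  dsimp only
  rw [← hrestrict]
  exact (f (n + 1)).2.2 (Fin.last n)

namespace DFA

variable {α σ : Type*} (M : DFA α σ)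

def IsCoaccessible (q : σ) : Prop :=
  ∃ v, M.evalFrom q v ∈ M.accept

theorem isCoaccessible_eval_iff {u : List α} :
    M.IsCoaccessible (M.eval u) ↔ ∃ w ∈ M.accepts, u <+: w := by
  constructor
  · rintro ⟨v, hv⟩
    exact ⟨u ++ v, by rwa [mem_accepts, eval, evalFrom_of_append], List.prefix_append u v⟩
  · rintro ⟨_, hw, v, rfl⟩
    exact ⟨v, by rwa [mem_accepts, eval, evalFrom_of_append] at hw⟩

end DFA

section PaddedSteps

variable {K : Type u} {σ : Type*} (M : DFA (Option K) σ) (ρ : ℕ → K)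

def PaddedStep (n : ℕ) (q q' : σ) : Prop :=
  ∃ v : List (Option K), M.evalFrom q v = q' ∧ v.reduceOption = [ρ n] ∧ M.IsCoaccessible q'

-- Chains start here rather than at `M.start`, since the words being split may begin with `none`s.
def IsNoneReachable (q : σ) : Prop :=
  ∃ u : List (Option K), u.reduceOption = [] ∧ M.eval u = q

variable {M ρ}

theorem exists_paddedStep_chain {n : ℕ} {u : List (Option K)}
    (hu : u.reduceOption = prefixWord ρ n) (hacc : M.IsCoaccessible (M.eval u)) :
    ∃ s : ℕ → σ, IsNoneReachable M (s 0) ∧ s n = M.eval u ∧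
      ∀ i < n, PaddedStep M ρ i (s i) (s (i + 1)) := by
  induction n generalizing u with
  | zero => exact ⟨fun _ => M.eval u, ⟨u, hu, rfl⟩, rfl, by simp⟩
  | succ n ih =>
    rw [prefixWord_succ, ← List.concat_eq_append, List.reduceOption_eq_concat_iff] at hu
    obtain ⟨a, b, rfl, ha, hb⟩ := hu
    have hstep : M.eval (a ++ some (ρ n) :: b) = M.evalFrom (M.eval a) (some (ρ n) :: b) :=
      M.evalFrom_of_append _ _ _
    have hacc_a : M.IsCoaccessible (M.eval a) := by
      obtain ⟨w, hw, hpre⟩ := M.isCoaccessible_eval_iff.1 hacc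
      exact M.isCoaccessible_eval_iff.2 ⟨w, hw, (List.prefix_append _ _).trans hpre⟩
    obtain ⟨s, hs₀, hsn, hs⟩ := ih ha hacc_a
    refine ⟨fun i => if i ≤ n then s i else M.eval (a ++ some (ρ n) :: b), by simpa using hs₀,
      by simp, fun i hi => ?_⟩
    rcases Nat.lt_succ_iff_lt_or_eq.1 hi with hi | rfl
    · simpa [hi.le, Nat.succ_le_of_lt hi] using hs i hi
    · simp only [le_refl, if_true, Nat.not_succ_le_self, if_false, hsn]
      exact ⟨some (ρ i) :: b, hstep.symm, by simp [hb], hacc⟩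

theorem exists_isProjOf_of_paddedStep_chain {s : ℕ → σ} (hs₀ : IsNoneReachable M (s 0))
    (hs : ∀ i, PaddedStep M ρ i (s i) (s (i + 1))) :
    ∃ ρ' ∈ LimitLang M.accepts, IsProjOf ρ ρ' := by
  obtain ⟨u₀, hu₀, hu₀s⟩ := hs₀
  choose v hv using hs
  let W (n : ℕ) : List (Option K) := u₀ ++ (prefixWord v n).flatten
  have hWsucc (n : ℕ) : W (n + 1) = W n ++ v n := by simp [W, prefixWord_succ]
  have hW (n : ℕ) : M.eval (W n) = s n ∧ (W n).reduceOption = prefixWord ρ n := by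
    induction n with
    | zero => simp [W, hu₀, hu₀s, prefixWord]
    | succ n ih =>
      rw [hWsucc, List.reduceOption_append, ih.2, (hv n).2.1, prefixWord_succ, ← (hv n).1,
        ← ih.1]
      exact ⟨M.evalFrom_of_append _ _ _, rfl⟩
  have hlen (n : ℕ) : n ≤ (W n).length := by
    simpa [(hW n).2] using (W n).reduceOption_length_le
  obtain ⟨ρ', hρ'⟩ := exists_prefixWord_eq_of_prefix_chain
    (fun n => hWsucc n ▸ List.prefix_append _ _) hlen
  refine ⟨ρ', fun m => ?_, isProjOf_of_forall_exists_reduceOption_eq fun n =>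
    ⟨_, by rw [hρ' n, (hW n).2]⟩⟩
  obtain ⟨w, hw, hpre⟩ := M.isCoaccessible_eval_iff.1 ((hW (m + 1)).1 ▸ (hv m).2.2)
  have hm : m ≤ (W (m + 1)).length := (Nat.le_succ m).trans (hlen (m + 1))
  rw [← hρ' (m + 1)] at hpre
  exact ⟨w, hw, (prefixWord_prefix_of_le ρ' hm).trans hpre⟩

end PaddedSteps

theorem stmt13_general {K : Type u}
    (L : Set (List (Option K))) (hL : RegularLang L) :
    {ρ : ℕ → K | ∃ ρ' ∈ LimitLang L, IsProjOf ρ ρ'} =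
      LimitLang (List.reduceOption '' L) := by
  obtain ⟨-, -, σ, _, M, hM⟩ := hL
  obtain rfl : L = M.accepts := Set.ext fun w => (hM w).symm
  ext ρ
  refine ⟨fun ⟨ρ', hρ', hproj⟩ => hproj.mem_limitLang_image_reduceOption hρ', fun hρ => ?_⟩
  have hchains (n : ℕ) : ∃ s : ℕ → σ, IsNoneReachable M (s 0) ∧
      ∀ i < n, PaddedStep M ρ i (s i) (s (i + 1)) := by
    obtain ⟨_, ⟨w, hw, rfl⟩, hpre⟩ := hρ n
    obtain ⟨u, hu, hred⟩ := List.exists_prefix_reduceOption_eq hpre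
    obtain ⟨s, hs₀, -, hs⟩ :=
      exists_paddedStep_chain hred (M.isCoaccessible_eval_iff.2 ⟨w, hw, hu⟩)
    exact ⟨s, hs₀, hs⟩
  obtain ⟨s, hs₀, hs⟩ := exists_infinite_chain_of_finite_chains _ _ hchains
  exact exists_isProjOf_of_paddedStep_chain hs₀ hs

/-- For a regular language `L` over `Option K`, the projections of the elements of
`[L]` are exactly the elements of `[φ[L]]`, where `φ = List.reduceOption` is the
erasing projection. -/
theorem stmt13 {K : Type u} [Nonempty K]
    (L : Set (List (Option K))) (hL : RegularLang L) :
    {ρ : ℕ → K | ∃ ρ' ∈ LimitLang L, IsProjOf ρ ρ'} =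
      LimitLang (List.reduceOption '' L) :=
  stmt13_general L hL
end
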